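/- arXiv:0803.0991 — 5 statements merged into one kernel-verified Lean document; each statement's English description precedes it below -/
import Mathlib

section
/- If 0 < b ≤ a, d = √(1 - b²/a²), a' = (a+b)/2, b' = √(ab), and d' = √(1 - (b')²/(a')²), then d' = (1 - √(1 - d²))/(1 + √(1 - d²)). -/
theorem agm_step_d (a b : ℝ) (hb : 0 < b) (hba : b ≤ a)
    (d a' b' d' : ℝ)
    (hd : d = Real.sqrt (1 - b ^ 2 / a ^ 2))
    (ha' : a' = (a + b) / 2)
    (hb' : b' = Real.sqrt (a * b))
    (hd' : d' = Real.sqrt (1 - b' ^ 2 / a' ^ 2)) :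
    d' = (1 - Real.sqrt (1 - d ^ 2)) / (1 + Real.sqrt (1 - d ^ 2)) := by
  have ha : 0 < a := lt_of_lt_of_le hb hba
  have hab : 0 < a + b := by linarith
  have hfrac : b ^ 2 / a ^ 2 ≤ 1 := by
    rw [div_le_one (by positivity)]
    nlinarith
  have hd2 : d ^ 2 = 1 - b ^ 2 / a ^ 2 := by
    rw [hd, Real.sq_sqrt (by linarith)]
  have h1 : 1 - d ^ 2 = (b / a) ^ 2 := by
    rw [hd2, div_pow]; ring
  have hsq : Real.sqrt (1 - d ^ 2) = b / a := by
    rw [h1, Real.sqrt_sq (by positivity)]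
  have hb'2 : b' ^ 2 = a * b := by
    rw [hb', Real.sq_sqrt (by positivity)]
  have hval : 1 - b' ^ 2 / a' ^ 2 = ((a - b) / (a + b)) ^ 2 := by
    rw [hb'2, ha']
    field_simp
    ring
  rw [hd', hval, Real.sqrt_sq (div_nonneg (by linarith) (by linarith)), hsq]
  field_simp
end

section
/- With rₙ as defined from the AGM iteration, the recurrence r_{n+1} = (aₙ/a_{n+1})²·rₙ − 2^{n+1}·(aₙ/a_{n+1} − 1) holds for all n. -/
theorem borwein_r_rec (a b : ℕ → ℝ) (M : ℝ)
    (ha0 : a 0 = 1) (hb0 : b 0 = 1 / Real.sqrt 2)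
    (ha : ∀ n, a (n + 1) = (a n + b n) / 2)
    (hb : ∀ n, b (n + 1) = Real.sqrt (a n * b n))
    (hMa : Filter.Tendsto a Filter.atTop (nhds M))
    (hMb : Filter.Tendsto b Filter.atTop (nhds M))
    (r : ℕ → ℝ)
    (hr : ∀ n, r n = (1 / Real.pi) * (M ^ 2 / a n ^ 2) +
      (1 / (2 * a n ^ 2)) * ∑' k : ℕ, (2 : ℝ) ^ (n + k) * (a (n + k) ^ 2 - b (n + k) ^ 2)) :
    ∀ n : ℕ, r (n + 1) = (a n / a (n + 1)) ^ 2 * r n -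
      2 ^ (n + 1) * (a n / a (n + 1) - 1) := by
  have hs2 : (Real.sqrt 2) ^ 2 = 2 := Real.sq_sqrt (by norm_num)
  have hs2pos : (0:ℝ) < Real.sqrt 2 := Real.sqrt_pos.mpr (by norm_num)
  have hs2le : Real.sqrt 2 ≤ 1.5 := by nlinarith
  have hs2ge : (1:ℝ) ≤ Real.sqrt 2 := by nlinarith
  -- basic bounds
  have key : ∀ n, 0 < b n ∧ b n ≤ a n ∧ a n ≤ 1 ∧ 1 / Real.sqrt 2 ≤ b n := by
    intro n
    induction n with
    | zero =>
      rw [ha0, hb0]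
      refine ⟨by positivity, ?_, le_refl _, le_refl _⟩
      rw [div_le_one hs2pos]; exact hs2ge
    | succ n ih =>
      obtain ⟨hbpos, hba, ha1, hblo⟩ := ih
      have hapos : 0 < a n := lt_of_lt_of_le hbpos hba
      have hsa : Real.sqrt (a n) ^ 2 = a n := Real.sq_sqrt hapos.le
      have hsb : Real.sqrt (b n) ^ 2 = b n := Real.sq_sqrt hbpos.le
      have hsbpos : 0 < Real.sqrt (b n) := Real.sqrt_pos.mpr hbpos
      have hsanonneg : 0 ≤ Real.sqrt (a n) := Real.sqrt_nonneg _
      have hBeq : b (n+1) = Real.sqrt (a n) * Real.sqrt (b n) := by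
        rw [hb n, Real.sqrt_mul hapos.le]
      refine ⟨?_, ?_, ?_, ?_⟩
      · rw [hBeq]; positivity
      · rw [hBeq, ha n]; nlinarith [sq_nonneg (Real.sqrt (a n) - Real.sqrt (b n))]
      · rw [ha n]; linarith
      · rw [hBeq]
        have h1 : Real.sqrt (b n) ≤ Real.sqrt (a n) := Real.sqrt_le_sqrt hba
        nlinarith
  -- gap bound
  have hgap : ∀ n, a n - b n ≤ (1/2) * (1/8) ^ n := by
    intro n
    induction n with
    | zero =>
      rw [ha0, hb0]
      have h12 : (1:ℝ)/2 ≤ 1 / Real.sqrt 2 := by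
        rw [div_le_div_iff₀ (by norm_num) hs2pos]; nlinarith
      rw [pow_zero]
      linarith
    | succ n ih =>
      obtain ⟨hbpos, hba, ha1, hblo⟩ := key n
      have hapos : 0 < a n := lt_of_lt_of_le hbpos hba
      have hsa : Real.sqrt (a n) ^ 2 = a n := Real.sq_sqrt hapos.le
      have hsb : Real.sqrt (b n) ^ 2 = b n := Real.sq_sqrt hbpos.le
      have hsbpos : 0 < Real.sqrt (b n) := Real.sqrt_pos.mpr hbpos
      have hsanonneg : 0 ≤ Real.sqrt (a n) := Real.sqrt_nonneg _
      have hst : Real.sqrt (b n) ≤ Real.sqrt (a n) := Real.sqrt_le_sqrt hba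
      have hsa1 : Real.sqrt (a n) ≤ 1 := by
        nlinarith
      have hblo2 : (2:ℝ)/3 ≤ b n := by
        rw [div_le_iff₀ hs2pos] at hblo
        nlinarith
      have h5t : (3:ℝ) ≤ 5 * Real.sqrt (b n) := by
        nlinarith
      have hBeq : b (n+1) = Real.sqrt (a n) * Real.sqrt (b n) := by
        rw [hb n, Real.sqrt_mul hapos.le]
      have hstep : a (n+1) - b (n+1) ≤ (a n - b n) / 8 := by
        rw [ha n, hBeq]
        nlinarith [mul_nonneg (sub_nonneg.mpr hst) (by linarith : (0:ℝ) ≤ 5 * Real.sqrt (b n) - 3 * Real.sqrt (a n))]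
      have : ((1:ℝ)/2) * (1/8) ^ (n+1) = ((1/2) * (1/8) ^ n) / 8 := by
        rw [pow_succ]; ring
      rw [this]
      linarith
  -- summability
  have hf : Summable (fun k : ℕ => (2:ℝ) ^ k * (a k ^ 2 - b k ^ 2)) := by
    refine Summable.of_nonneg_of_le ?_ ?_ (summable_geometric_of_lt_one (r := (1:ℝ)/4) (by norm_num) (by norm_num))
    · intro k
      obtain ⟨hbpos, hba, _, _⟩ := key k
      have h1 : b k ^ 2 ≤ a k ^ 2 := by nlinarith
      have h2 : (0:ℝ) < 2 ^ k := by positivity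
      nlinarith
    · intro k
      obtain ⟨hbpos, hba, ha1, _⟩ := key k
      have hg := hgap k
      have hpow : (2:ℝ) ^ k * (1/8) ^ k = (1/4) ^ k := by
        rw [← mul_pow]; norm_num
      have h2k : (0:ℝ) < 2 ^ k := by positivity
      have hsum2 : a k + b k ≤ 2 := by linarith
      have habnn : 0 ≤ a k - b k := by linarith
      calc (2:ℝ) ^ k * (a k ^ 2 - b k ^ 2) = 2 ^ k * ((a k + b k) * (a k - b k)) := by ring
        _ ≤ 2 ^ k * (2 * ((1/2) * (1/8) ^ k)) := by
            apply mul_le_mul_of_nonneg_left _ h2k.le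
            apply mul_le_mul hsum2 hg habnn (by norm_num)
        _ = (1/4) ^ k := by rw [← hpow]; ring
  have hfn : ∀ n : ℕ, Summable (fun k : ℕ => (2:ℝ) ^ (n + k) * (a (n + k) ^ 2 - b (n + k) ^ 2)) := by
    intro n
    have := (summable_nat_add_iff n).mpr hf
    simpa [add_comm] using this
  intro n
  obtain ⟨hbpos, hba, ha1, hblo⟩ := key n
  have hapos : 0 < a n := lt_of_lt_of_le hbpos hba
  have hA1pos : 0 < a (n+1) := by rw [ha n]; linarith
  -- split the tsum at n
  have hsplit : (∑' k : ℕ, (2:ℝ) ^ (n + k) * (a (n + k) ^ 2 - b (n + k) ^ 2))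
      = 2 ^ n * (a n ^ 2 - b n ^ 2)
        + ∑' k : ℕ, (2:ℝ) ^ ((n+1) + k) * (a ((n+1) + k) ^ 2 - b ((n+1) + k) ^ 2) := by
    have htail : (∑' k : ℕ, (2:ℝ) ^ (n + (k + 1)) * (a (n + (k + 1)) ^ 2 - b (n + (k + 1)) ^ 2))
        = ∑' k : ℕ, (2:ℝ) ^ ((n+1) + k) * (a ((n+1) + k) ^ 2 - b ((n+1) + k) ^ 2) :=
      tsum_congr fun k => by rw [show n + (k + 1) = (n + 1) + k from by omega]
    rw [Summable.tsum_eq_zero_add (hfn n), htail]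
    norm_num
  rw [hr (n+1), hr n, hsplit]
  set T := ∑' k : ℕ, (2:ℝ) ^ ((n+1) + k) * (a ((n+1) + k) ^ 2 - b ((n+1) + k) ^ 2) with hT
  have hz : a (n+1) = (a n + b n) / 2 := ha n
  rw [hz]
  have hxy : 0 < a n + b n := by linarith
  have hpi : Real.pi ≠ 0 := Real.pi_ne_zero
  field_simp
  ring
end

section
/- The sequence rₙ = (1/π)(M²/aₙ²) + (1/(2aₙ²)) Σ_{k=n}^∞ 2ᵏ(aₖ² - bₖ²) converges to 1/π. -/
open Filter

theorem borwein_r_tendsto (a b : ℕ → ℝ) (M : ℝ)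
    (ha0 : a 0 = 1) (hb0 : b 0 = 1 / Real.sqrt 2)
    (ha : ∀ n, a (n + 1) = (a n + b n) / 2)
    (hb : ∀ n, b (n + 1) = Real.sqrt (a n * b n))
    (hMa : Filter.Tendsto a Filter.atTop (nhds M))
    (hMb : Filter.Tendsto b Filter.atTop (nhds M))
    (r : ℕ → ℝ)
    (hr : ∀ n, r n = (1 / Real.pi) * (M ^ 2 / a n ^ 2) +
      (1 / (2 * a n ^ 2)) * ∑' k : ℕ, (2 : ℝ) ^ (n + k) * (a (n + k) ^ 2 - b (n + k) ^ 2)) :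
    Filter.Tendsto r Filter.atTop (nhds (1 / Real.pi)) := by
  have hs2 : (1:ℝ) ≤ Real.sqrt 2 := by
    nlinarith [Real.sq_sqrt (by norm_num : (0:ℝ) ≤ 2), Real.sqrt_nonneg 2]
  have hs2pos : (0:ℝ) < Real.sqrt 2 := by linarith
  -- invariant: 0 ≤ b n ≤ a n
  have key : ∀ n, 0 ≤ b n ∧ b n ≤ a n := by
    intro n
    induction n with
    | zero =>
      rw [ha0, hb0]
      constructor
      · positivity
      · rw [div_le_one hs2pos]; exact hs2
    | succ n ih =>
      obtain ⟨h0, h1⟩ := ih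
      constructor
      · rw [hb]; exact Real.sqrt_nonneg _
      · rw [hb, ha]
        have h2 : (a n + b n) / 2 = Real.sqrt (((a n + b n) / 2) ^ 2) :=
          (Real.sqrt_sq (by linarith)).symm
        rw [h2]
        apply Real.sqrt_le_sqrt
        nlinarith [sq_nonneg (a n - b n)]
  -- b is bounded below by b 0
  have bmono : ∀ n, b 0 ≤ b n := by
    intro n
    induction n with
    | zero => exact le_refl _
    | succ n ih =>
      rw [hb]
      have : b n = Real.sqrt (b n * b n) := (Real.sqrt_mul_self (key n).1).symm
      calc b 0 ≤ b n := ih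
        _ = Real.sqrt (b n * b n) := this
        _ ≤ Real.sqrt (a n * b n) := by
            apply Real.sqrt_le_sqrt
            exact mul_le_mul_of_nonneg_right (key n).2 (key n).1
  have hMpos : 0 < M := by
    have : b 0 ≤ M := ge_of_tendsto' hMb bmono
    rw [hb0] at this
    have : (0:ℝ) < 1 / Real.sqrt 2 := by positivity
    linarith [ge_of_tendsto' hMb bmono, hb0 ▸ this]
  -- e n := a n ^2 - b n ^2 bound
  have ebd : ∀ n, a n ^ 2 - b n ^ 2 ≤ (1/2) * (1/4) ^ n := by
    intro n
    induction n with
    | zero =>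
      rw [ha0, hb0, div_pow, Real.sq_sqrt (by norm_num : (0:ℝ) ≤ 2)]
      norm_num
    | succ n ih =>
      have hb2 : b (n+1) ^ 2 = a n * b n := by
        rw [hb]; exact Real.sq_sqrt (mul_nonneg (le_trans (key n).1 (key n).2) (key n).1)
      rw [ha, hb2]
      obtain ⟨h0, h1⟩ := key n
      have : (1/2 : ℝ) * (1/4) ^ (n+1) = ((1/2) * (1/4)^n) / 4 := by ring
      rw [this]
      nlinarith [sq_nonneg (a n - b n)]
  have enonneg : ∀ n, 0 ≤ a n ^ 2 - b n ^ 2 := by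
    intro n
    obtain ⟨h0, h1⟩ := key n
    nlinarith
  set t : ℕ → ℝ := fun k => (2:ℝ) ^ k * (a k ^ 2 - b k ^ 2) with ht_def
  have tnonneg : ∀ k, 0 ≤ t k := fun k => mul_nonneg (by positivity) (enonneg k)
  have tbd : ∀ k, t k ≤ (1/2) * (1/2) ^ k := by
    intro k
    have h1 : t k ≤ (2:ℝ)^k * ((1/2) * (1/4)^k) :=
      mul_le_mul_of_nonneg_left (ebd k) (by positivity)
    calc t k ≤ (2:ℝ)^k * ((1/2) * (1/4)^k) := h1
      _ = (1/2) * (2 * (1/4))^k := by rw [mul_pow]; ring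
      _ = (1/2) * (1/2)^k := by norm_num
  have hgeo : Summable (fun k : ℕ => (1/2 : ℝ) * (1/2) ^ k) :=
    (summable_geometric_of_lt_one (by norm_num) (by norm_num)).mul_left _
  have ht : Summable t := Summable.of_nonneg_of_le tnonneg tbd hgeo
  have htail : ∀ n, Summable (fun k => t (n + k)) := by
    intro n
    exact ht.comp_injective (add_right_injective n)
  have hgeotail : ∀ n : ℕ, Summable (fun k : ℕ => (1/2 : ℝ) * (1/2) ^ (n + k)) := by
    intro n
    exact hgeo.comp_injective (add_right_injective n)
  -- tail sum bound
  have Tbd : ∀ n, (∑' k, t (n + k)) ≤ (1/2 : ℝ) ^ n := by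
    intro n
    have h1 : (∑' k, t (n + k)) ≤ ∑' k, (1/2 : ℝ) * (1/2) ^ (n + k) :=
      Summable.tsum_le_tsum (fun k => tbd (n + k)) (htail n) (hgeotail n)
    have h2 : (∑' k, (1/2 : ℝ) * (1/2) ^ (n + k)) = (1/2) ^ n := by
      have : ∀ k : ℕ, (1/2 : ℝ) * (1/2) ^ (n + k) = ((1/2) * (1/2)^n) * (1/2)^k := by
        intro k; rw [pow_add]; ring
      rw [tsum_congr this, tsum_mul_left, tsum_geometric_of_lt_one (by norm_num) (by norm_num)]
      norm_num
      ring
    linarith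
  have Tnonneg : ∀ n, 0 ≤ (∑' k, t (n + k)) := by
    intro n
    exact tsum_nonneg (fun k => tnonneg (n + k))
  have hT0 : Tendsto (fun n => ∑' k, t (n + k)) atTop (nhds 0) := by
    apply squeeze_zero Tnonneg Tbd
    exact tendsto_pow_atTop_nhds_zero_of_lt_one (by norm_num) (by norm_num)
  -- final assembly
  have haM : Tendsto (fun n => a n ^ 2) atTop (nhds (M ^ 2)) := hMa.pow 2
  have hM2 : M ^ 2 ≠ 0 := by positivity
  have h1 : Tendsto (fun n => (1 / Real.pi) * (M ^ 2 / a n ^ 2)) atTop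
      (nhds (1 / Real.pi)) := by
    have := (tendsto_const_nhds (x := M ^ 2) (f := atTop)).div haM hM2
    have h := this.const_mul (1 / Real.pi)
    rwa [div_self hM2, mul_one] at h
  have h2 : Tendsto (fun n => (1 / (2 * a n ^ 2)) * ∑' k, t (n + k)) atTop (nhds 0) := by
    have hden : Tendsto (fun n => 2 * a n ^ 2) atTop (nhds (2 * M ^ 2)) :=
      haM.const_mul 2
    have hne : 2 * M ^ 2 ≠ 0 := by positivity
    have hc : Tendsto (fun n => 1 / (2 * a n ^ 2)) atTop (nhds (1 / (2 * M ^ 2))) :=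
      (tendsto_const_nhds).div hden hne
    have := hc.mul hT0
    rwa [mul_zero] at this
  have hrr : r = fun n => (1 / Real.pi) * (M ^ 2 / a n ^ 2) +
      (1 / (2 * a n ^ 2)) * ∑' k, t (n + k) := by
    funext n
    rw [hr n]
  rw [hrr]
  simpa using h1.add h2
end

section
/- Define d₀ = 1/√2, r₀ = 1/2, d_{n+1} = (1 − √(1−dₙ²))/(1 + √(1−dₙ²)), r_{n+1} = (1+d_{n+1})²·rₙ − 2^{n+1}·d_{n+1}. Then rₙ → 1/π. -/
/-!
Along the AGM, `dₙ` is the eccentricity `√(aₙ² - bₙ²) / aₙ`: Landen's transformation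
`d ↦ (1 - √(1 - d²)) / (1 + √(1 - d²))` is exactly one AGM step, so `dₙ₊₁ = (aₙ - bₙ) / (aₙ + bₙ)`.
With this, the recursion for `rₙ` telescopes to `2 aₙ² rₙ = 1 - ∑_{k<n} 2ᵏ (aₖ² - bₖ²)`,
and Gauss's formula together with `aₙ → M` gives `rₙ → (2M²/π) / (2M²) = 1/π`.
-/

open Filter Topology Finset

theorem landen_sqrt_div_sq {x y : ℝ} (hx : 0 < x) (hy : 0 < y) :
    (1 - Real.sqrt ((y / x) ^ 2)) / (1 + Real.sqrt ((y / x) ^ 2)) = (x - y) / (x + y) := by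
  rw [Real.sqrt_sq (by positivity)]
  field_simp

theorem one_sub_sq_sub_div_add {x y : ℝ} (hx : 0 < x) (hy : 0 < y) :
    1 - ((x - y) / (x + y)) ^ 2 = (Real.sqrt (x * y) / ((x + y) / 2)) ^ 2 := by
  rw [div_pow _ ((x + y) / 2), Real.sq_sqrt (by positivity)]
  field_simp
  ring

section AGM

variable {a b : ℕ → ℝ} (ha : ∀ n, a (n + 1) = (a n + b n) / 2)
  (hb : ∀ n, b (n + 1) = Real.sqrt (a n * b n))
include ha hb

theorem agm_sq_sub_sq_succ {n : ℕ} (hab : 0 ≤ a n * b n) :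
    a (n + 1) ^ 2 - b (n + 1) ^ 2 = ((a n - b n) / 2) ^ 2 := by
  rw [ha, hb, Real.sq_sqrt hab]
  ring

theorem agm_bounds (hb0 : 0 < b 0) (hab0 : b 0 ≤ a 0) (n : ℕ) : b 0 ≤ b n ∧ b n ≤ a n := by
  induction n with
  | zero => exact ⟨le_rfl, hab0⟩
  | succ n ih =>
    obtain ⟨hbn, habn⟩ := ih
    have hbn_pos : 0 < b n := hb0.trans_le hbn
    constructor
    · calc b 0 ≤ b n := hbn
        _ = Real.sqrt (b n * b n) := (Real.sqrt_mul_self hbn_pos.le).symm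
        _ ≤ b (n + 1) := hb n ▸ Real.sqrt_le_sqrt (by nlinarith)
    · calc b (n + 1) ≤ Real.sqrt (((a n + b n) / 2) ^ 2) :=
            hb n ▸ Real.sqrt_le_sqrt (by nlinarith [sq_nonneg (a n - b n)])
        _ = a (n + 1) := by rw [Real.sqrt_sq (by linarith), ha]

theorem agm_sq_sub_sq_nonneg (hb0 : 0 < b 0) (hab0 : b 0 ≤ a 0) (n : ℕ) :
    0 ≤ a n ^ 2 - b n ^ 2 := by
  obtain ⟨hbn, habn⟩ := agm_bounds ha hb hb0 hab0 n
  nlinarith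

theorem agm_sq_sub_sq_le (hb0 : 0 < b 0) (hab0 : b 0 ≤ a 0) (n : ℕ) :
    a n ^ 2 - b n ^ 2 ≤ (a 0 ^ 2 - b 0 ^ 2) * (1 / 4) ^ n := by
  induction n with
  | zero => simp
  | succ n ih =>
    obtain ⟨hbn, habn⟩ := agm_bounds ha hb hb0 hab0 n
    have hbn_pos : 0 < b n := hb0.trans_le hbn
    calc a (n + 1) ^ 2 - b (n + 1) ^ 2
        = ((a n - b n) / 2) ^ 2 := agm_sq_sub_sq_succ ha hb (by nlinarith)
      _ ≤ (a n ^ 2 - b n ^ 2) / 4 := by nlinarith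
      _ ≤ (a 0 ^ 2 - b 0 ^ 2) * (1 / 4) ^ (n + 1) := by rw [pow_succ (1 / 4 : ℝ)]; linarith

theorem agm_summable (hb0 : 0 < b 0) (hab0 : b 0 ≤ a 0) :
    Summable fun k ↦ (2 : ℝ) ^ k * (a k ^ 2 - b k ^ 2) := by
  refine Summable.of_nonneg_of_le
    (fun k ↦ mul_nonneg (by positivity) (agm_sq_sub_sq_nonneg ha hb hb0 hab0 k)) (fun k ↦ ?_)
    (summable_geometric_two.mul_left (a 0 ^ 2 - b 0 ^ 2))
  calc (2 : ℝ) ^ k * (a k ^ 2 - b k ^ 2)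
      ≤ 2 ^ k * ((a 0 ^ 2 - b 0 ^ 2) * (1 / 4) ^ k) :=
        mul_le_mul_of_nonneg_left (agm_sq_sub_sq_le ha hb hb0 hab0 k) (by positivity)
    _ = (a 0 ^ 2 - b 0 ^ 2) * (1 / 2) ^ k := by
        rw [mul_left_comm, ← mul_pow]
        norm_num

variable (ha_pos : ∀ n, 0 < a n) (hb_pos : ∀ n, 0 < b n) {d : ℕ → ℝ}
  (hd : ∀ n, d (n + 1) = (1 - Real.sqrt (1 - d n ^ 2)) / (1 + Real.sqrt (1 - d n ^ 2)))
  (hd0 : 1 - d 0 ^ 2 = (b 0 / a 0) ^ 2)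
include ha_pos hb_pos hd hd0

theorem landen_one_sub_sq (n : ℕ) : 1 - d n ^ 2 = (b n / a n) ^ 2 := by
  induction n with
  | zero => exact hd0
  | succ n ih =>
    rw [hd, ih, landen_sqrt_div_sq (ha_pos n) (hb_pos n),
      one_sub_sq_sub_div_add (ha_pos n) (hb_pos n), ha, hb]

theorem landen_succ (n : ℕ) : d (n + 1) = (a n - b n) / (a n + b n) := by
  rw [hd, landen_one_sub_sq ha hb ha_pos hb_pos hd hd0, landen_sqrt_div_sq (ha_pos n) (hb_pos n)]

end AGM

theorem borwein_r_eq {a b d r : ℕ → ℝ} (ha : ∀ n, a (n + 1) = (a n + b n) / 2)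
    (ha_pos : ∀ n, 0 < a n) (hb_pos : ∀ n, 0 < b n)
    (hd : ∀ n, d (n + 1) = (a n - b n) / (a n + b n))
    (hr : ∀ n, r (n + 1) = (1 + d (n + 1)) ^ 2 * r n - 2 ^ (n + 1) * d (n + 1))
    (hr0 : r 0 = 1 / (2 * a 0 ^ 2)) (n : ℕ) :
    r n = (1 - ∑ k ∈ range n, (2 : ℝ) ^ k * (a k ^ 2 - b k ^ 2)) / (2 * a n ^ 2) := by
  induction n with
  | zero => simpa using hr0
  | succ n ih =>
    have hab : a n + b n ≠ 0 := (add_pos (ha_pos n) (hb_pos n)).ne'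
    have han : a n ≠ 0 := (ha_pos n).ne'
    rw [hr, ih, hd, sum_range_succ, ha]
    field_simp
    ring

theorem borwein_quadratic_general (a b : ℕ → ℝ) (M : ℝ)
    (ha0 : a 0 = 1) (hb0 : b 0 = 1 / Real.sqrt 2)
    (ha : ∀ n, a (n + 1) = (a n + b n) / 2)
    (hb : ∀ n, b (n + 1) = Real.sqrt (a n * b n))
    (hMa : Filter.Tendsto a Filter.atTop (nhds M))
    (hGauss : ∑' k : ℕ, (2 : ℝ) ^ k * (a k ^ 2 - b k ^ 2) = 1 - 2 * M ^ 2 / Real.pi)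
    (d r : ℕ → ℝ)
    (hd0 : d 0 = 1 / Real.sqrt 2) (hr0 : r 0 = 1 / 2)
    (hd : ∀ n, d (n + 1) =
      (1 - Real.sqrt (1 - d n ^ 2)) / (1 + Real.sqrt (1 - d n ^ 2)))
    (hr : ∀ n, r (n + 1) = (1 + d (n + 1)) ^ 2 * r n - 2 ^ (n + 1) * d (n + 1)) :
    Filter.Tendsto r Filter.atTop (nhds (1 / Real.pi)) := by
  have hb0_pos : 0 < b 0 := by rw [hb0]; positivity
  have hab0 : b 0 ≤ a 0 := by
    rw [ha0, hb0, div_le_one (by positivity), Real.le_sqrt zero_le_one] <;> norm_num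
  have hbnd := agm_bounds ha hb hb0_pos hab0
  have hb_pos n : 0 < b n := hb0_pos.trans_le (hbnd n).1
  have ha_pos n : 0 < a n := (hb_pos n).trans_le (hbnd n).2
  have hM : 0 < M :=
    hb0_pos.trans_le (ge_of_tendsto hMa (.of_forall fun n ↦ (hbnd n).1.trans (hbnd n).2))
  have hd0' : 1 - d 0 ^ 2 = (b 0 / a 0) ^ 2 := by
    rw [hd0, ha0, hb0, div_one, div_pow, Real.sq_sqrt zero_le_two]
    norm_num
  have hr_eq := borwein_r_eq ha ha_pos hb_pos (landen_succ ha hb ha_pos hb_pos hd hd0') hr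
    (by rw [hr0, ha0]; norm_num)
  have hsum := hGauss ▸ (agm_summable ha hb hb0_pos hab0).hasSum
  have hlim := (tendsto_const_nhds (x := (1 : ℝ)).sub hsum.tendsto_sum_nat).div
    ((hMa.pow 2).const_mul 2) (by positivity)
  rw [show 1 / Real.pi = (1 - (1 - 2 * M ^ 2 / Real.pi)) / (2 * M ^ 2) by
    field_simp [Real.pi_pos.ne']; ring]
  exact hlim.congr fun n ↦ (hr_eq n).symm

theorem borwein_quadratic (a b : ℕ → ℝ) (M : ℝ)
    (ha0 : a 0 = 1) (hb0 : b 0 = 1 / Real.sqrt 2)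
    (ha : ∀ n, a (n + 1) = (a n + b n) / 2)
    (hb : ∀ n, b (n + 1) = Real.sqrt (a n * b n))
    (hMa : Filter.Tendsto a Filter.atTop (nhds M))
    (hMb : Filter.Tendsto b Filter.atTop (nhds M))
    (hGauss : ∑' k : ℕ, (2 : ℝ) ^ k * (a k ^ 2 - b k ^ 2) = 1 - 2 * M ^ 2 / Real.pi)
    (d r : ℕ → ℝ)
    (hd0 : d 0 = 1 / Real.sqrt 2) (hr0 : r 0 = 1 / 2)
    (hd : ∀ n, d (n + 1) =
      (1 - Real.sqrt (1 - d n ^ 2)) / (1 + Real.sqrt (1 - d n ^ 2)))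
    (hr : ∀ n, r (n + 1) = (1 + d (n + 1)) ^ 2 * r n - 2 ^ (n + 1) * d (n + 1)) :
    Filter.Tendsto r Filter.atTop (nhds (1 / Real.pi)) :=
  borwein_quadratic_general a b M ha0 hb0 ha hb hMa hGauss d r hd0 hr0 hd hr
end

section
/- Let dₙ ∈ (0,1) satisfy d_{n+1} = (1−√(1−dₙ²))/(1+√(1−dₙ²)), and set sₙ = √(d_{2n}). Then s_{n+1} = (1 − (1−sₙ⁴)^{1/4})/(1 + (1−sₙ⁴)^{1/4}). -/
theorem borwein_s_rec (d : ℕ → ℝ) (hmem : ∀ n, d n ∈ Set.Ioo (0 : ℝ) 1)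
    (hd : ∀ n, d (n + 1) =
      (1 - Real.sqrt (1 - d n ^ 2)) / (1 + Real.sqrt (1 - d n ^ 2)))
    (s : ℕ → ℝ) (hs : ∀ n, s n = Real.sqrt (d (2 * n))) :
    ∀ n, s (n + 1) =
      (1 - (1 - s n ^ 4) ^ ((1 : ℝ) / 4)) / (1 + (1 - s n ^ 4) ^ ((1 : ℝ) / 4)) := by
  intro n
  set x := d (2 * n) with hxdef
  obtain ⟨hx0, hx1⟩ := hmem (2 * n)
  have hx2 : (0 : ℝ) < 1 - x ^ 2 := by nlinarith
  have hx2' : 1 - x ^ 2 < 1 := by nlinarith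
  set r := Real.sqrt (1 - x ^ 2) with hrdef
  have hr0 : 0 < r := Real.sqrt_pos.mpr hx2
  have hr1 : r < 1 := by
    nlinarith [Real.sq_sqrt hx2.le, Real.sqrt_nonneg (1 - x ^ 2), hx0]
  set q := Real.sqrt r with hqdef
  have hq0 : 0 < q := Real.sqrt_pos.mpr hr0
  have hq1 : q < 1 := by
    nlinarith [Real.sq_sqrt hr0.le, Real.sqrt_nonneg r]
  have hq2 : q ^ 2 = r := Real.sq_sqrt hr0.le
  have hd1 : d (2 * n + 1) = (1 - r) / (1 + r) := hd (2 * n)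
  have h1r : (0:ℝ) < 1 + r := by linarith
  have key : 1 - d (2 * n + 1) ^ 2 = (2 * q / (1 + r)) ^ 2 := by
    rw [hd1, div_pow, div_pow]
    field_simp
    nlinarith [hq2]
  have hsq : Real.sqrt (1 - d (2 * n + 1) ^ 2) = 2 * q / (1 + r) := by
    rw [key, Real.sqrt_sq (by positivity)]
  have hd2 : d (2 * n + 2) = ((1 - q) / (1 + q)) ^ 2 := by
    rw [hd (2 * n + 1), hsq, div_pow]
    rw [div_eq_div_iff (by positivity) (by positivity)]
    field_simp
    nlinarith [hq2]
  have hsn1 : s (n + 1) = (1 - q) / (1 + q) := by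
    rw [hs (n + 1), show 2 * (n + 1) = 2 * n + 2 by ring, hd2,
      Real.sqrt_sq (div_nonneg (by linarith) (by linarith))]
  have hrpow : (1 - s n ^ 4) ^ ((1 : ℝ) / 4) = q := by
    have hsx : s n ^ 4 = x ^ 2 := by
      rw [hs n, show (4:ℕ) = 2 * 2 by rfl, pow_mul, Real.sq_sqrt hx0.le, hxdef]
    rw [hsx, hqdef, hrdef, Real.sqrt_eq_rpow, Real.sqrt_eq_rpow,
      ← Real.rpow_mul hx2.le]
    norm_num
  rw [hsn1, hrpow]
end
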